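/- arXiv:1910.07283 — 2 statements merged into one kernel-verified Lean document; each statement's English description precedes it below -/
import Mathlib

section
/- Let G = (V, E, w) be a finite weighted graph and G' = (V, E', w) a subgraph with E' ⊆ E. For every minimum spanning forest F' of G', there exists a minimum spanning forest F of G such that no edge of E' \ F' belongs to F (i.e., (E' \ F') ∩ F = ∅). -/
/-!
Take an MSF `F` of `E` containing as few edges of `E' \ F'` as possible and suppose it contains
such an edge `ab`. Deleting `ab` from `F` separates `a` from `b`, so the path from `a` to `b` in
`F'` crosses this cut along an edge `cd` of `F'`. Then `F - ab + cd` is a spanning forest of `E`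
and `F' - cd + ab` is a spanning forest of `E'`; minimality of `F'` gives `w cd ≤ w ab`, so
`F - ab + cd` is an MSF of `E` with fewer edges of `E' \ F'`. Edge sets may contain loops, which
do not change the graph: a loop of `E' \ F'` has nonnegative weight by minimality of `F'`, and
is simply deleted from `F`.
-/

open SimpleGraph Finset

variable {V : Type*} {W : Type*} [AddCommMonoid W] [LinearOrder W] [IsOrderedAddMonoid W]

/-- The simple graph whose edges are a given finite set of (unordered) pairs. -/
def fromEdges (F : Finset (Sym2 V)) : SimpleGraph V := SimpleGraph.fromEdgeSet ↑F

/-- Two edge sets induce the same connected components (reachability). -/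
def SameComponents (E F : Finset (Sym2 V)) : Prop :=
  ∀ a b : V, (fromEdges E).Reachable a b ↔ (fromEdges F).Reachable a b

/-- `F` is a spanning forest of the graph with edge set `E`. -/
def IsSpanningForest (E F : Finset (Sym2 V)) : Prop :=
  F ⊆ E ∧ (fromEdges F).IsAcyclic ∧ SameComponents E F

/-- `F` is a minimum spanning forest of the graph with edge set `E` and weights `w`. -/
def IsMSF (E : Finset (Sym2 V)) (w : Sym2 V → W) (F : Finset (Sym2 V)) : Prop :=
  IsSpanningForest E F ∧ ∀ F', IsSpanningForest E F' → F.sum w ≤ F'.sum w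

/-- `T` is a minimum spanning tree of the (connected) graph with edge set `E`. -/
def IsMST (E : Finset (Sym2 V)) (w : Sym2 V → W) (T : Finset (Sym2 V)) : Prop :=
  IsMSF E w T ∧ (fromEdges T).Connected


namespace SimpleGraph

variable {G : SimpleGraph V}

theorem reachable_sup_edge_iff {a b x y : V} :
    (G ⊔ edge a b).Reachable x y ↔
      G.Reachable x y ∨ G.Reachable x a ∧ G.Reachable b y ∨ G.Reachable x b ∧ G.Reachable a y := by
  constructor
  · rintro ⟨p⟩
    induction p with
    | nil => exact .inl .rfl
    | @cons u v _ huv _ ih =>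
      rcases huv with huv | huv
      · have h := huv.reachable
        rcases ih with h' | ⟨h₁, h₂⟩ | ⟨h₁, h₂⟩
        exacts [.inl (h.trans h'), .inr (.inl ⟨h.trans h₁, h₂⟩), .inr (.inr ⟨h.trans h₁, h₂⟩)]
      · obtain ⟨⟨rfl, rfl⟩ | ⟨rfl, rfl⟩, -⟩ := (edge_adj ..).1 huv
        · rcases ih with h | ⟨-, h⟩ | ⟨-, h⟩
          exacts [.inr (.inl ⟨.rfl, h⟩), .inr (.inl ⟨.rfl, h⟩), .inl h]
        · rcases ih with h | ⟨-, h⟩ | ⟨-, h⟩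
          exacts [.inr (.inr ⟨.rfl, h⟩), .inl h, .inr (.inr ⟨.rfl, h⟩)]
  · have hab : (G ⊔ edge a b).Reachable a b := by
      obtain rfl | hab := eq_or_ne a b
      · exact .rfl
      · exact Adj.reachable (.inr ((edge_adj ..).2 ⟨.inl ⟨rfl, rfl⟩, hab⟩))
    have hle : G ≤ G ⊔ edge a b := le_sup_left
    rintro (h | ⟨h₁, h₂⟩ | ⟨h₁, h₂⟩)
    · exact h.mono hle
    · exact ((h₁.mono hle).trans hab).trans (h₂.mono hle)
    · exact ((h₁.mono hle).trans hab.symm).trans (h₂.mono hle)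

theorem reachable_sup_edge_iff_of_reachable {a b c d x y : V}
    (hac : G.Reachable a c) (hbd : G.Reachable b d) :
    (G ⊔ edge a b).Reachable x y ↔ (G ⊔ edge c d).Reachable x y := by
  have key : ∀ {a b c d : V}, G.Reachable a c → G.Reachable b d →
      (G ⊔ edge a b).Reachable x y → (G ⊔ edge c d).Reachable x y := by
    intro a b c d hac hbd
    simp only [reachable_sup_edge_iff]
    rintro (h | ⟨h₁, h₂⟩ | ⟨h₁, h₂⟩)
    · exact .inl h
    · exact .inr (.inl ⟨h₁.trans hac, hbd.symm.trans h₂⟩)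
    · exact .inr (.inr ⟨h₁.trans hbd, hac.symm.trans h₂⟩)
  exact ⟨key hac hbd, key hac.symm hbd.symm⟩

theorem Walk.IsTrail.reachable_deleteEdges_of_mem_darts {u v : V} {p : G.Walk u v}
    (hp : p.IsTrail) {d : G.Dart} (hd : d ∈ p.darts) :
    (G.deleteEdges {d.edge}).Reachable u d.fst ∧ (G.deleteEdges {d.edge}).Reachable d.snd v := by
  induction p with
  | nil => simp at hd
  | @cons u x _ hux p ih =>
    rw [Walk.isTrail_cons] at hp
    rcases List.mem_cons.1 hd with rfl | hd
    · exact ⟨.rfl, ⟨p.toDeleteEdges _ fun e he he' => hp.2 (by rwa [he'] at he)⟩⟩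
    · obtain ⟨hx, hv⟩ := ih hp.1 hd
      have hux' : (G.deleteEdges {d.edge}).Adj u x :=
        (deleteEdges_adj ..).2 ⟨hux, fun h => hp.2 (h ▸ List.mem_map_of_mem hd)⟩
      exact ⟨hux'.reachable.trans hx, hv⟩

end SimpleGraph

theorem fromEdges_adj {S : Finset (Sym2 V)} {a b : V} :
    (fromEdges S).Adj a b ↔ s(a, b) ∈ S ∧ a ≠ b :=
  fromEdgeSet_adj ..

theorem fromEdges_mono {S T : Finset (Sym2 V)} (h : S ⊆ T) : fromEdges S ≤ fromEdges T :=
  fromEdgeSet_mono (coe_subset.2 h)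

theorem reachable_fromEdges_of_mem {S : Finset (Sym2 V)} {a b : V} (h : s(a, b) ∈ S) :
    (fromEdges S).Reachable a b := by
  obtain rfl | hab := eq_or_ne a b
  · exact .rfl
  · exact Adj.reachable (fromEdges_adj.2 ⟨h, hab⟩)

section DecidableEq

variable [DecidableEq V]

theorem fromEdges_insert (S : Finset (Sym2 V)) (a b : V) :
    fromEdges (insert s(a, b) S) = fromEdges S ⊔ edge a b := by
  ext x y
  simp only [fromEdges, edge, sup_adj, fromEdgeSet_adj, coe_insert, Set.mem_insert_iff,
    Set.mem_singleton_iff, mem_coe]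
  tauto

theorem fromEdges_erase (S : Finset (Sym2 V)) (e : Sym2 V) :
    fromEdges (S.erase e) = (fromEdges S).deleteEdges {e} := by
  ext x y
  simp [fromEdges]

theorem fromEdges_eq_erase_sup_edge {S : Finset (Sym2 V)} {a b : V} (h : s(a, b) ∈ S) :
    fromEdges S = fromEdges (S.erase s(a, b)) ⊔ edge a b := by
  rw [← fromEdges_insert, insert_erase h]

theorem fromEdges_insert_of_isDiag (S : Finset (Sym2 V)) {e : Sym2 V} (he : e.IsDiag) :
    fromEdges (insert e S) = fromEdges S := by
  ext x y
  simp only [fromEdges, fromEdgeSet_adj, coe_insert, Set.mem_insert_iff, mem_coe]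
  exact ⟨fun ⟨h, hxy⟩ => ⟨h.resolve_left fun h' => hxy (Sym2.mk_isDiag_iff.1 (h' ▸ he)), hxy⟩,
    fun ⟨h, hxy⟩ => ⟨.inr h, hxy⟩⟩

theorem fromEdges_erase_of_isDiag (S : Finset (Sym2 V)) {e : Sym2 V} (he : e.IsDiag) :
    fromEdges (S.erase e) = fromEdges S := by
  rw [fromEdges_erase]
  exact deleteEdges_of_subset_diagSet _ (Set.singleton_subset_iff.2 he)

theorem not_reachable_fromEdges_erase {T : Finset (Sym2 V)} {a b : V}
    (hT : (fromEdges T).IsAcyclic) (h : s(a, b) ∈ T) (hab : a ≠ b) :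
    ¬(fromEdges (T.erase s(a, b))).Reachable a b := by
  rw [fromEdges_erase]
  exact isAcyclic_iff_forall_isBridge.1 hT ((mem_edgeSet _).2 (fromEdges_adj.2 ⟨h, hab⟩))

end DecidableEq

theorem exists_isSpanningForest (E : Finset (Sym2 V)) : ∃ F, IsSpanningForest E F := by
  classical
  obtain ⟨H, hle, hH, hreach⟩ := (fromEdges E).exists_isAcyclic_reachable_eq_le
  have hF : fromEdges (E.filter (· ∈ H.edgeSet)) = H := by
    ext x y
    simp only [fromEdges_adj, mem_filter, mem_edgeSet]
    exact ⟨fun h => h.1.2, fun h => ⟨⟨(fromEdges_adj.1 (hle h)).1, h⟩, h.ne⟩⟩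
  exact ⟨_, filter_subset _ _, hF ▸ hH, fun a b => by rw [hF, hreach]⟩

namespace IsSpanningForest

variable [DecidableEq V] {E F : Finset (Sym2 V)}

theorem erase_of_isDiag (hF : IsSpanningForest E F) {e : Sym2 V} (he : e.IsDiag) :
    IsSpanningForest E (F.erase e) := by
  refine ⟨(erase_subset _ _).trans hF.1, ?_, fun a b => ?_⟩ <;>
    rw [fromEdges_erase_of_isDiag _ he]
  exacts [hF.2.1, hF.2.2 a b]

theorem insert_of_isDiag (hF : IsSpanningForest E F) {e : Sym2 V} (heE : e ∈ E)
    (he : e.IsDiag) : IsSpanningForest E (insert e F) := by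
  refine ⟨insert_subset heE hF.1, ?_, fun a b => ?_⟩ <;>
    rw [fromEdges_insert_of_isDiag _ he]
  exacts [hF.2.1, hF.2.2 a b]

theorem exchange (hF : IsSpanningForest E F) {a b c d : V} (habF : s(a, b) ∈ F) (hab : a ≠ b)
    (hcd : s(c, d) ∈ E) (hac : (fromEdges (F.erase s(a, b))).Reachable a c)
    (hbd : (fromEdges (F.erase s(a, b))).Reachable b d) :
    s(c, d) ∉ F.erase s(a, b) ∧ IsSpanningForest E (insert s(c, d) (F.erase s(a, b))) := by
  have hncd : ¬(fromEdges (F.erase s(a, b))).Reachable c d := fun h =>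
    not_reachable_fromEdges_erase hF.2.1 habF hab ((hac.trans h).trans hbd.symm)
  refine ⟨fun h => hncd (reachable_fromEdges_of_mem h),
    insert_subset hcd ((erase_subset _ _).trans hF.1), ?_, fun x y => ?_⟩
  · rw [fromEdges_insert]
    exact (hF.2.1.anti (fromEdges_mono (erase_subset _ _))).sup_edge_of_not_reachable hncd
  · rw [hF.2.2, fromEdges_eq_erase_sup_edge habF, fromEdges_insert,
      reachable_sup_edge_iff_of_reachable hac hbd]

end IsSpanningForest

omit [IsOrderedAddMonoid W] in
theorem exists_isMSF (E : Finset (Sym2 V)) (w : Sym2 V → W) : ∃ F, IsMSF E w F := by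
  classical
  obtain ⟨F, hF, hmin⟩ := (E.powerset.filter (IsSpanningForest E)).exists_min_image (·.sum w)
    (let ⟨F, hF⟩ := exists_isSpanningForest E; ⟨F, mem_filter.2 ⟨mem_powerset.2 hF.1, hF⟩⟩)
  exact ⟨F, (mem_filter.1 hF).2, fun F' hF' => hmin F' (mem_filter.2 ⟨mem_powerset.2 hF'.1, hF'⟩)⟩

namespace IsMSF

variable {E F : Finset (Sym2 V)} {w : Sym2 V → W}

omit [IsOrderedAddMonoid W] in
theorem of_sum_le (hF : IsMSF E w F) {F₂ : Finset (Sym2 V)} (hF₂ : IsSpanningForest E F₂)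
    (h : F₂.sum w ≤ F.sum w) : IsMSF E w F₂ :=
  ⟨hF₂, fun F' hF' => h.trans (hF.2 F' hF')⟩

variable [DecidableEq V]

theorem erase_of_isDiag (hF : IsMSF E w F) {e : Sym2 V} (heF : e ∈ F) (he : e.IsDiag)
    (hw : 0 ≤ w e) : IsMSF E w (F.erase e) :=
  hF.of_sum_le (hF.1.erase_of_isDiag he)
    ((le_add_of_nonneg_left hw).trans_eq (add_sum_erase F w heF))

theorem exchange_of_weight_le (hF : IsMSF E w F) {a b c d : V}
    (habF : s(a, b) ∈ F) (hab : a ≠ b) (hcd : s(c, d) ∈ E)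
    (hac : (fromEdges (F.erase s(a, b))).Reachable a c)
    (hbd : (fromEdges (F.erase s(a, b))).Reachable b d) (hw : w s(c, d) ≤ w s(a, b)) :
    IsMSF E w (insert s(c, d) (F.erase s(a, b))) := by
  obtain ⟨hcdF, hF₂⟩ := hF.1.exchange habF hab hcd hac hbd
  refine hF.of_sum_le hF₂ ?_
  rw [sum_insert hcdF, ← add_sum_erase _ _ habF]
  exact add_le_add_left hw _

variable [AddLeftReflectLE W]

theorem nonneg_of_isDiag (hF : IsMSF E w F) {e : Sym2 V} (heE : e ∈ E)
    (heF : e ∉ F) (he : e.IsDiag) : 0 ≤ w e := by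
  have := hF.2 _ (hF.1.insert_of_isDiag heE he)
  rwa [sum_insert heF, le_add_iff_nonneg_left] at this

theorem weight_le_of_exchange (hF : IsMSF E w F) {a b c d : V}
    (habF : s(a, b) ∈ F) (hab : a ≠ b) (hcd : s(c, d) ∈ E)
    (hac : (fromEdges (F.erase s(a, b))).Reachable a c)
    (hbd : (fromEdges (F.erase s(a, b))).Reachable b d) : w s(a, b) ≤ w s(c, d) := by
  obtain ⟨hcdF, hF₂⟩ := hF.1.exchange habF hab hcd hac hbd
  have := hF.2 _ hF₂
  rwa [sum_insert hcdF, ← add_sum_erase _ _ habF, add_le_add_iff_right] at this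

variable {E' F' : Finset (Sym2 V)}

theorem exists_isMSF_insert_erase (hsub : E' ⊆ E) (hF' : IsMSF E' w F') (hF : IsMSF E w F)
    {a b : V} (habF : s(a, b) ∈ F) (habE' : s(a, b) ∈ E') (hab : a ≠ b) :
    ∃ f ∈ F', IsMSF E w (insert f (F.erase s(a, b))) := by
  set H := fromEdges (F.erase s(a, b))
  have hnab : ¬H.Reachable a b := not_reachable_fromEdges_erase hF.1.2.1 habF hab
  obtain ⟨p, hp⟩ := ((hF'.1.2.2 a b).1 (reachable_fromEdges_of_mem habE')).some.toPath
  obtain ⟨⟨⟨c, d⟩, hcd⟩, hdart, hac, had⟩ := p.exists_boundary_dart {x | H.Reachable a x} .rfl hnab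
  obtain ⟨hca', hdb'⟩ := hp.isTrail.reachable_deleteEdges_of_mem_darts hdart
  rw [← fromEdges_erase] at hca' hdb'
  have hcdF' : s(c, d) ∈ F' := (fromEdges_adj.1 hcd).1
  have hbd : H.Reachable b d := by
    have hdb : (fromEdges F).Reachable d b :=
      (hF.1.2.2 d b).1 (((hF'.1.2.2 d b).2 (hdb'.mono (fromEdges_mono (erase_subset _ _)))).mono
        (fromEdges_mono hsub))
    rw [fromEdges_eq_erase_sup_edge habF, reachable_sup_edge_iff] at hdb
    rcases hdb with h | ⟨h, -⟩ | ⟨h, -⟩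
    exacts [h.symm, absurd h.symm had, h.symm]
  have hw : w s(c, d) ≤ w s(a, b) :=
    hF'.weight_le_of_exchange hcdF' hcd.ne habE' hca'.symm hdb'
  exact ⟨_, hcdF', hF.exchange_of_weight_le habF hab (hsub (hF'.1.1 hcdF')) hac hbd hw⟩

theorem exists_card_inter_sdiff_lt (hsub : E' ⊆ E) (hF' : IsMSF E' w F') (hF : IsMSF E w F)
    {e : Sym2 V} (he : e ∈ F ∩ (E' \ F')) :
    ∃ F₂, IsMSF E w F₂ ∧ #(F₂ ∩ (E' \ F')) < #(F ∩ (E' \ F')) := by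
  obtain ⟨heF, heE', heF'⟩ : e ∈ F ∧ e ∈ E' ∧ e ∉ F' := by simpa using he
  suffices ∃ F₂, IsMSF E w F₂ ∧ F₂ ∩ (E' \ F') ⊆ (F ∩ (E' \ F')).erase e from
    let ⟨F₂, hF₂, hsub₂⟩ := this
    ⟨F₂, hF₂, card_lt_card (hsub₂.trans_ssubset (erase_ssubset he))⟩
  by_cases hdiag : e.IsDiag
  · refine ⟨F.erase e, hF.erase_of_isDiag heF hdiag (hF'.nonneg_of_isDiag heE' heF' hdiag), ?_⟩
    rw [erase_inter]
  · induction e with | h a b =>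
    obtain ⟨f, hfF', hF₂⟩ := hF'.exists_isMSF_insert_erase hsub hF heF heE' hdiag
    refine ⟨_, hF₂, ?_⟩
    rw [insert_inter_of_notMem fun h => (mem_sdiff.1 h).2 hfF', erase_inter]

end IsMSF

theorem msf_incremental_general {V : Type*} [DecidableEq V]
    (E E' : Finset (Sym2 V)) (w : Sym2 V → ℝ) (hsub : E' ⊆ E)
    (F' : Finset (Sym2 V)) (hF' : IsMSF E' w F') :
    ∃ F : Finset (Sym2 V), IsMSF E w F ∧ (E' \ F') ∩ F = ∅ := by
  obtain ⟨F, hF, hmin⟩ := (measure fun F => #(F ∩ (E' \ F'))).wf.has_min {F | IsMSF E w F}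
    (exists_isMSF E w)
  refine ⟨F, hF, ?_⟩
  rw [inter_comm, ← not_nonempty_iff_eq_empty]
  rintro ⟨e, he⟩
  obtain ⟨F₂, hF₂, hlt⟩ := hF'.exists_card_inter_sdiff_lt hsub hF he
  exact hmin F₂ hF₂ hlt

/-- Incremental MSF lemma (Eppstein): for every MSF `F'` of a subgraph `G' = (V, E')`
of `G = (V, E)`, there is an MSF `F` of `G` with `(E' \ F') ∩ F = ∅`. -/
theorem msf_incremental {V : Type*} [Fintype V] [DecidableEq V]
    (E E' : Finset (Sym2 V)) (w : Sym2 V → ℝ) (hsub : E' ⊆ E)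
    (F' : Finset (Sym2 V)) (hF' : IsMSF E' w F') :
    ∃ F : Finset (Sym2 V), IsMSF E w F ∧ (E' \ F') ∩ F = ∅ :=
  msf_incremental_general E E' w hsub F' hF'
end

section
/- Let T be a tree on n vertices and m ≥ 1 a fixed minimum cluster size with 2m ≤ n. Process the edges of T in any order, removing them one at a time; call a removal a 'true split' if both resulting components of the component being split have size ≥ m. Then the total number of true splits over the whole process is at most n/m − 1. -/
open SimpleGraph Finset

variable {V : Type*} {W : Type*} [AddCommMonoid W] [LinearOrder W] [IsOrderedAddMonoid W]

/-!
Give an edge set `F` the capacity `∑_C (⌊|C|/m⌋ - 1)` over the connected components `C` of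
`fromEdges F` (truncated at `0`, so small components contribute nothing). If a component of
size `a` falls apart into pieces of sizes `aᵢ`, then `∑ᵢ (⌊aᵢ/m⌋ - 1) + #{i | m ≤ aᵢ} ≤ ⌊a/m⌋`;
hence deleting edges never increases the capacity, and a true split, which leaves two pieces of
size `≥ m` in one old component, decreases it by at least one. The capacity of the tree is
`⌊n/m⌋ - 1` and stays nonnegative, so there are at most `⌊n/m⌋ - 1` true splits.
-/

section Numeric

variable {ι : Type*} {m : ℕ} (s : Finset ι) (a : ι → ℕ)

theorem sum_div_sub_one_add_card_le (hm : 0 < m) :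
    ∑ i ∈ s, (a i / m - 1) + #{i ∈ s | m ≤ a i} ≤ (∑ i ∈ s, a i) / m := by
  rw [card_filter, ← sum_add_distrib, Nat.le_div_iff_mul_le hm, sum_mul]
  refine sum_le_sum fun i _ => ?_
  split_ifs with h
  · rw [Nat.sub_add_cancel ((Nat.one_le_div_iff hm).2 h)]
    exact Nat.div_mul_le_self _ _
  · simp [Nat.div_eq_of_lt (not_le.1 h)]

theorem sum_div_sub_one_le (hm : 0 < m) :
    ∑ i ∈ s, (a i / m - 1) ≤ (∑ i ∈ s, a i) / m - 1 := by
  by_cases hbig : ∃ i ∈ s, m ≤ a i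
  · obtain ⟨i, hi, hai⟩ := hbig
    have : 0 < #{i ∈ s | m ≤ a i} := card_pos.2 ⟨i, mem_filter.2 ⟨hi, hai⟩⟩
    have := sum_div_sub_one_add_card_le s a hm
    omega
  · push Not at hbig
    rw [sum_eq_zero fun i hi => by rw [Nat.div_eq_of_lt (hbig i hi), zero_tsub]]
    exact Nat.zero_le _

theorem sum_div_sub_one_lt {i j : ι} (hm : 0 < m) (hi : i ∈ s) (hj : j ∈ s) (hij : i ≠ j)
    (hai : m ≤ a i) (haj : m ≤ a j) :
    ∑ i ∈ s, (a i / m - 1) < (∑ i ∈ s, a i) / m - 1 := by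
  have : 1 < #{i ∈ s | m ≤ a i} :=
    one_lt_card.2 ⟨i, mem_filter.2 ⟨hi, hai⟩, j, mem_filter.2 ⟨hj, haj⟩, hij⟩
  have := sum_div_sub_one_add_card_le s a hm
  omega

end Numeric

theorem card_subtype_add_le_of_descent {N : ℕ} (f : ℕ → ℕ) (Q : Fin N → Prop)
    (hstep : ∀ j : Fin N, f (j + 1) ≤ f j) (hdrop : ∀ j : Fin N, Q j → f (j + 1) < f j) :
    Nat.card {j // Q j} + f N ≤ f 0 := by
  classical
  induction N with
  | zero => simp
  | succ N ih =>
    have ih' := ih (fun j => Q j.castSucc) (fun j => hstep j.castSucc) (fun j => hdrop j.castSucc)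
    have hlast := hstep (Fin.last N)
    have hdlast := hdrop (Fin.last N)
    simp only [Nat.card_eq_fintype_card, Fintype.card_subtype, card_filter,
      Fin.sum_univ_castSucc, Fin.val_last] at ih' hlast hdlast ⊢
    split_ifs at hdlast ⊢ with hQ
    · have := hdlast hQ
      omega
    · omega

namespace SimpleGraph

theorem ConnectedComponent.map_ofLE_eq_iff {G H : SimpleGraph V} (h : G ≤ H)
    (c : G.ConnectedComponent) (d : H.ConnectedComponent) :
    c.map (Hom.ofLE h) = d ↔ c.supp ⊆ d.supp := by
  induction c using ConnectedComponent.ind with | h v => ?_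
  rw [ConnectedComponent.map_mk, ← ConnectedComponent.mem_supp_iff]
  exact ⟨ConnectedComponent.connectedComponentMk_supp_subset_supp h d, fun hsub => hsub rfl⟩

theorem ncard_setOf_reachable (G : SimpleGraph V) (u : V) :
    {x | G.Reachable u x}.ncard = (G.connectedComponentMk u).supp.ncard := by
  congr 1
  ext x
  simp [ConnectedComponent.mem_supp_iff, reachable_comm]

variable [Fintype V] [DecidableEq V]

noncomputable def splitCapacity (m : ℕ) (G : SimpleGraph V) [DecidableRel G.Adj] : ℕ :=
  ∑ c : G.ConnectedComponent, (c.supp.ncard / m - 1)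

variable {G H : SimpleGraph V} [DecidableRel G.Adj] {m : ℕ}

theorem splitCapacity_eq_of_connected (hG : G.Connected) :
    splitCapacity m G = Fintype.card V / m - 1 := by
  have := hG.preconnected.subsingleton_connectedComponent
  obtain ⟨v⟩ := hG.nonempty
  have huniv : (G.connectedComponentMk v).supp = Set.univ :=
    Set.eq_univ_of_forall fun x => (ConnectedComponent.mem_supp_iff _ x).2 (Subsingleton.elim _ _)
  rw [splitCapacity, Fintype.sum_subsingleton _ (G.connectedComponentMk v), huniv,
    Set.ncard_univ, Nat.card_eq_fintype_card]

theorem ConnectedComponent.ncard_supp_eq_sum [DecidableEq H.ConnectedComponent] (h : G ≤ H)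
    (d : H.ConnectedComponent) :
    d.supp.ncard = ∑ c : G.ConnectedComponent with c.map (Hom.ofLE h) = d, c.supp.ncard := by
  classical
  simp_rw [ConnectedComponent.map_ofLE_eq_iff h, Set.ncard_eq_toFinset_card']
  rw [← disjiUnion_supp_toFinset_eq_supp_toFinset h]
  exact card_disjiUnion _ _ _

theorem sum_fiber_div_sub_one_le [DecidableEq H.ConnectedComponent] (hm : 0 < m)
    (h : G ≤ H) (d : H.ConnectedComponent) :
    ∑ c : G.ConnectedComponent with c.map (Hom.ofLE h) = d, (c.supp.ncard / m - 1) ≤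
      d.supp.ncard / m - 1 := by
  rw [ConnectedComponent.ncard_supp_eq_sum h d]
  exact sum_div_sub_one_le _ _ hm

variable [DecidableRel H.Adj]

theorem splitCapacity_mono (hm : 0 < m) (h : G ≤ H) : splitCapacity m G ≤ splitCapacity m H := by
  classical
  rw [splitCapacity, ← sum_fiberwise univ (·.map (Hom.ofLE h))]
  exact sum_le_sum fun d _ => sum_fiber_div_sub_one_le hm h d

theorem splitCapacity_lt_of_split (hm : 0 < m) (h : G ≤ H) {u v : V} (huv : H.Reachable u v)
    (hsplit : ¬G.Reachable u v) (hu : m ≤ (G.connectedComponentMk u).supp.ncard)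
    (hv : m ≤ (G.connectedComponentMk v).supp.ncard) : splitCapacity m G < splitCapacity m H := by
  classical
  rw [splitCapacity, ← sum_fiberwise univ (·.map (Hom.ofLE h))]
  refine sum_lt_sum (fun d _ => sum_fiber_div_sub_one_le hm h d)
    ⟨H.connectedComponentMk u, mem_univ _, ?_⟩
  rw [ConnectedComponent.ncard_supp_eq_sum h]
  refine sum_div_sub_one_lt _ _ hm (by simp) ?_ (fun huv' => hsplit (ConnectedComponent.exact huv'))
    hu hv
  simpa using ConnectedComponent.sound huv.symm

end SimpleGraph

section FromEdges

variable {F T : Finset (Sym2 V)} {u v : V}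

theorem fromEdges_adj_s14 : (fromEdges F).Adj u v ↔ s(u, v) ∈ F ∧ u ≠ v := by
  simp [fromEdges]

instance [DecidableEq V] (F : Finset (Sym2 V)) : DecidableRel (fromEdges F).Adj :=
  fun _ _ => decidable_of_iff _ fromEdges_adj_s14.symm

theorem fromEdges_mono_s14 (h : F ⊆ T) : fromEdges F ≤ fromEdges T :=
  fromEdgeSet_mono (coe_subset.2 h)

theorem not_reachable_of_isAcyclic [DecidableEq V] (hT : (fromEdges T).IsAcyclic)
    (he : s(u, v) ∈ T) (huv : u ≠ v) (hF : F ⊆ T.erase s(u, v)) :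
    ¬(fromEdges F).Reachable u v := by
  have hbridge := isAcyclic_iff_forall_adj_isBridge.1 hT (fromEdges_adj_s14.2 ⟨he, huv⟩)
  refine fun hr => hbridge (hr.mono ?_)
  rw [deleteEdges, fromEdges, fromEdges, ← fromEdgeSet_sdiff]
  exact fromEdgeSet_mono (by simpa [← coe_erase] using hF)

end FromEdges

section RemainingEdges

variable {α : Type*} [DecidableEq α] {N : ℕ} (T : Finset α) (order : Fin N → α)

def remainingEdges (t : ℕ) : Finset α :=
  T \ ({i | (i : ℕ) < t} : Finset (Fin N)).image order

@[simp] theorem remainingEdges_zero : remainingEdges T order 0 = T := by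
  simp [remainingEdges]

theorem remainingEdges_succ (t : ℕ) :
    remainingEdges T order (t + 1) = T \ ({i | (i : ℕ) ≤ t} : Finset (Fin N)).image order := by
  simp [remainingEdges]

theorem remainingEdges_succ_subset (t : ℕ) :
    remainingEdges T order (t + 1) ⊆ remainingEdges T order t :=
  sdiff_subset_sdiff le_rfl (image_subset_image (monotone_filter_right _ fun i h => by omega))

theorem remainingEdges_succ_subset_erase (j : Fin N) :
    remainingEdges T order (j + 1) ⊆ T.erase (order j) := by
  intro e he
  simp only [remainingEdges, mem_sdiff, mem_image, mem_filter, mem_univ, true_and] at he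
  exact mem_erase.2 ⟨fun hej => he.2 ⟨j, by omega, hej.symm⟩, he.1⟩

theorem order_mem_remainingEdges (hinj : Function.Injective order) {j : Fin N}
    (hj : order j ∈ T) : order j ∈ remainingEdges T order j := by
  simp only [remainingEdges, mem_sdiff, mem_image, mem_filter, mem_univ, true_and]
  exact ⟨hj, fun ⟨i, hi, hij⟩ => (hinj hij ▸ hi).false⟩

end RemainingEdges

theorem splitCapacity_remainingEdges_succ_lt [Fintype V] [DecidableEq V] {N m : ℕ}
    {T : Finset (Sym2 V)} {order : Fin N → Sym2 V} (hm : 0 < m)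
    (hacyc : (fromEdges T).IsAcyclic) (hinj : Function.Injective order) {j : Fin N} {u v : V}
    (he : order j = s(u, v)) (heT : s(u, v) ∈ T) (huv : u ≠ v)
    (hu : m ≤ {x | (fromEdges (remainingEdges T order (j + 1))).Reachable u x}.ncard)
    (hv : m ≤ {x | (fromEdges (remainingEdges T order (j + 1))).Reachable v x}.ncard) :
    splitCapacity m (fromEdges (remainingEdges T order (j + 1))) <
      splitCapacity m (fromEdges (remainingEdges T order j)) := by
  rw [ncard_setOf_reachable] at hu hv
  have hmem : s(u, v) ∈ remainingEdges T order j :=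
    he ▸ order_mem_remainingEdges T order hinj (he ▸ heT)
  refine splitCapacity_lt_of_split hm (fromEdges_mono_s14 (remainingEdges_succ_subset T order j))
    (fromEdges_adj_s14.2 ⟨hmem, huv⟩).reachable ?_ hu hv
  exact not_reachable_of_isAcyclic hacyc heT huv (he ▸ remainingEdges_succ_subset_erase T order j)

/-- Removing the edges of a tree `T` on `n` vertices one at a time (in an arbitrary
order `order`), a removal is a *true split* when both components resulting from the
split have size at least `m`. The total number of true splits is at most `n/m − 1`,
i.e. `(count + 1) * m ≤ n`. -/
theorem true_splits_bound {V : Type*} [Fintype V] [DecidableEq V]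
    (n m : ℕ) (hm : 1 ≤ m) (hnm : 2 * m ≤ n) (hcard : Fintype.card V = n)
    (T : Finset (Sym2 V)) (hdiag : ∀ e ∈ T, ¬ e.IsDiag)
    (hconn : (fromEdges T).Connected) (hacyc : (fromEdges T).IsAcyclic)
    (order : Fin T.card → Sym2 V) (hinj : Function.Injective order)
    (hrange : ∀ j, order j ∈ T) :
    (Nat.card {j : Fin T.card //
        ∃ u v : V, order j = s(u, v) ∧
          m ≤ Set.ncard {x : V | (fromEdges (T \ (Finset.univ.filter
                (fun i : Fin T.card => (i : ℕ) ≤ (j : ℕ))).image order)).Reachable u x} ∧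
          m ≤ Set.ncard {x : V | (fromEdges (T \ (Finset.univ.filter
                (fun i : Fin T.card => (i : ℕ) ≤ (j : ℕ))).image order)).Reachable v x}}
      + 1) * m ≤ n := by
  have h2 : 2 ≤ n / m := (Nat.le_div_iff_mul_le hm).2 hnm
  have hcap : splitCapacity m (fromEdges (remainingEdges T order 0)) = n / m - 1 := by
    rw [remainingEdges_zero, splitCapacity_eq_of_connected hconn, hcard]
  calc (Nat.card _ + 1) * m ≤ n / m * m := Nat.mul_le_mul_right m ?_
    _ ≤ n := Nat.div_mul_le_self n m
  refine Nat.add_le_of_le_sub (by omega) ?_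
  rw [← hcap]
  refine (Nat.le_add_right _ _).trans (card_subtype_add_le_of_descent
    (fun t => splitCapacity m (fromEdges (remainingEdges T order t))) _
    (fun j => splitCapacity_mono hm (fromEdges_mono_s14 (remainingEdges_succ_subset T order j))) ?_)
  rintro j ⟨u, v, he, hu, hv⟩
  rw [← remainingEdges_succ] at hu hv
  exact splitCapacity_remainingEdges_succ_lt hm hacyc hinj he (he ▸ hrange j)
    (fun h => hdiag _ (hrange j) (by simp [he, h])) hu hv
end
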